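/- arXiv:math/0702073 — 4 statements merged into one kernel-verified Lean document; each statement's English description precedes it below -/
import Mathlib

section
/- Let φ be the golden ratio. The image of ℤ² under the map (x,y) ↦ (φ⁻⁴x + φ⁻¹y, φ⁻³x) mod ℤ² is dense in the torus ℝ²/ℤ². -/
noncomputable def gr : ℝ := (1 + Real.sqrt 5) / 2

noncomputable def Psi (p : ℤ × ℤ) : AddCircle (1 : ℝ) × AddCircle (1 : ℝ) :=
  (((gr ^ 4)⁻¹ * p.1 + gr⁻¹ * p.2 : ℝ), ((gr ^ 3)⁻¹ * p.1 : ℝ))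

/-!
For a fixed first coordinate `x ∈ ℤ`, the points `Psi (x, y)` run through the line
`{φ⁻⁴ x + φ⁻¹ y} × {φ⁻³ x}`, whose first coordinate is an irrational rotation orbit and hence dense.
So the closure of the image contains every horizontal circle at height `φ⁻³ x`, and these
heights are again dense because `φ⁻³` is irrational.
-/

open Real goldenRatio

theorem Real.goldenRatio_pow_irrational {n : ℕ} (hn : n ≠ 0) : Irrational (φ ^ n) := by
  rw [← fib_succ_sub_goldenConj_mul_fib]
  exact (goldenConj_irrational.mul_natCast (Nat.fib_pos.2 hn.bot_lt).ne').natCast_sub _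

theorem AddCircle.denseRange_add_zsmul_coe {a p : ℝ} (h : Irrational (a / p)) (c : AddCircle p) :
    DenseRange fun n : ℤ => c + n • (a : AddCircle p) :=
  (Homeomorph.addLeft c).surjective.denseRange.comp (denseRange_zsmul_coe_iff.2 h)
    (Homeomorph.addLeft c).continuous

theorem Dense.of_dense_fibers {X Y : Type*} [TopologicalSpace X] [TopologicalSpace Y]
    {s : Set (X × Y)} {t : Set Y} (ht : Dense t) (hs : ∀ y ∈ t, Dense {x | (x, y) ∈ s}) :
    Dense s := by
  have hline : ∀ y ∈ t, ∀ x, (x, y) ∈ closure s := fun y hy x =>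
    (isClosed_closure.preimage (Continuous.prodMk_left y)).closure_subset_iff.2
      (fun _ hx => subset_closure hx) (hs y hy x)
  intro ⟨x, y⟩
  exact (isClosed_closure.preimage (Continuous.prodMk_right x)).closure_subset_iff.2
    (fun y hy => hline y hy x) (ht y)

theorem gr_eq_goldenRatio : gr = φ := rfl

theorem Psi_dense : Dense (Set.range Psi) := by
  have hcoe (a : ℝ) (n : ℤ) : ((a * n : ℝ) : AddCircle (1 : ℝ)) = n • (a : AddCircle (1 : ℝ)) := by
    rw [mul_comm, ← zsmul_eq_mul, AddCircle.coe_zsmul]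
  refine .of_dense_fibers (AddCircle.denseRange_zsmul_coe_iff (a := (gr ^ 3)⁻¹).2 ?_) ?_
  · rw [div_one, gr_eq_goldenRatio]
    exact (goldenRatio_pow_irrational three_ne_zero).inv
  rintro _ ⟨x, rfl⟩
  refine (AddCircle.denseRange_add_zsmul_coe (a := gr⁻¹) ?_ (((gr ^ 4)⁻¹ * x : ℝ))).mono ?_
  · rw [div_one, gr_eq_goldenRatio]
    exact goldenRatio_irrational.inv
  rintro _ ⟨y, rfl⟩
  exact ⟨(x, y), by simp [Psi, hcoe]⟩
end

section
/- Let φ be the golden ratio and suppose x = a + bφ with a, b ∈ 2ℤ, a ≥ 2, and 0 ≤ x ≤ 2φ⁻³, so that φ³x = (a+2b) + (2a+3b)φ. Then |a+2b| < a; specifically, if a + 2b ≥ a then x > 1, and if a + 2b ≤ -a then x < 0, each contradicting 0 ≤ x ≤ 2φ⁻³. -/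
theorem descent_step (a b : ℤ) (x : ℝ)
    (hx : x = (a : ℝ) + (b : ℝ) * gr)
    (ha : Even a) (hb : Even b) (ha2 : 2 ≤ a)
    (hx0 : 0 ≤ x) (hx1 : x ≤ 2 * (gr ^ 3)⁻¹)
    (hcube : gr ^ 3 * x = ((a + 2 * b : ℤ) : ℝ) + ((2 * a + 3 * b : ℤ) : ℝ) * gr) :
    (a + 2 * b ≥ a → x > 1) ∧ (a + 2 * b ≤ -a → x < 0) := by
  have h5 : (2 : ℝ) < Real.sqrt 5 := by
    rw [show (2:ℝ) = Real.sqrt 4 by rw [show (4:ℝ) = 2^2 by norm_num, Real.sqrt_sq]; norm_num]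
    exact Real.sqrt_lt_sqrt (by norm_num) (by norm_num)
  have hgr : (1 : ℝ) < gr := by unfold gr; linarith
  have haR : (2 : ℝ) ≤ (a : ℝ) := by exact_mod_cast ha2
  constructor
  · intro h
    have hb0 : (0 : ℝ) ≤ (b : ℝ) := by exact_mod_cast (by linarith : (0:ℤ) ≤ b)
    have : (0:ℝ) ≤ (b:ℝ) * gr := mul_nonneg hb0 (by linarith)
    rw [hx]; linarith
  · intro h
    have hba : (b : ℝ) ≤ -(a : ℝ) := by exact_mod_cast (by linarith : b ≤ -a)
    have : (b:ℝ) * gr ≤ (-(a:ℝ)) * gr := by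
      apply mul_le_mul_of_nonneg_right hba (by linarith)
    rw [hx]
    nlinarith
end

section
/- Let φ be the golden ratio. For x, y ∈ ℤ write φ⁻⁴x + φ⁻¹y = m + ε₁ and φ⁻³x = n + ε₂ with m, n ∈ ℤ. Then φ³y ≡ 2ε₁ + 3ε₂ (mod ℤ). -/
/-! Both congruences are in fact integer identities: `φ³ - 2φ⁻¹ = 3` and `2φ⁻⁴ + 3φ⁻³ = 1`.
Substituting `ε₁, ε₂` from the hypotheses, `φ³y - (2ε₁ + 3ε₂) = 3y - x + 2m + 3n`. -/

open Real goldenRatio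

namespace Real

theorem goldenRatio_pow_three_sub_two_mul_inv : φ ^ 3 - 2 * φ⁻¹ = 3 := by
  rw [inv_goldenRatio, ← one_sub_goldenConj]
  linear_combination (φ + 1) * goldenRatio_sq

theorem two_mul_inv_goldenRatio_pow_four_add_three_mul_inv_pow_three :
    2 * (φ ^ 4)⁻¹ + 3 * (φ ^ 3)⁻¹ = 1 := by
  rw [← inv_pow, ← inv_pow, inv_goldenRatio]
  linear_combination (2 * ψ ^ 2 - ψ + 1) * goldenConj_sq

end Real

theorem phi_cube_y_cong (x y m n : ℤ) (ε₁ ε₂ : ℝ)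
    (h₁ : (gr ^ 4)⁻¹ * x + gr⁻¹ * y = (m : ℝ) + ε₁)
    (h₂ : (gr ^ 3)⁻¹ * x = (n : ℝ) + ε₂) :
    ∃ k : ℤ, gr ^ 3 * y - (2 * ε₁ + 3 * ε₂) = (k : ℝ) := by
  rw [gr_eq_goldenRatio] at h₁ h₂ ⊢
  refine ⟨3 * y - x + 2 * m + 3 * n, ?_⟩
  push_cast
  linear_combination 2 * h₁ + 3 * h₂ + (y : ℝ) * goldenRatio_pow_three_sub_two_mul_inv
    - (x : ℝ) * two_mul_inv_goldenRatio_pow_four_add_three_mul_inv_pow_three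
end

section
/- Let φ be the golden ratio, and define x̂ = φ³x - ε₂ and ŷ = φ³y - 2ε₁ - 3ε₂ where ε₁, ε₂ are as above (fractional offsets of φ⁻⁴x + φ⁻¹y and φ⁻³x). Then φ⁻⁴x̂ + φ⁻¹ŷ ≡ -φ⁻³ε₁ (mod ℤ). -/
/-!
From `φ² = φ + 1` one gets `φ⁻¹ = φ - 1`, `φ⁻³ = 2φ - 3` and `φ⁻⁴ = 5 - 3φ`. Substituting
`ε₁ = φ⁻⁴x + φ⁻¹y - m` and `ε₂ = φ⁻³x - n`, the expression `φ⁻⁴x̂ + φ⁻¹ŷ + φ⁻³ε₁` becomes an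
element of `ℤ[φ]` that is linear in `x, y, m, n`; its coefficients are `0, 2, 1, 2`
(the coefficient of `x` vanishes because `φ⁻¹ - φ⁻⁴ = 2φ⁻³`), so it equals the integer
`m + 2n + 2y`.
-/

section GoldenField

variable {K : Type*} [Field K] {φ : K}

lemma inv_eq_sub_one_of_sq_eq_add_one (hφ : φ ^ 2 = φ + 1) : φ⁻¹ = φ - 1 :=
  inv_eq_of_mul_eq_one_right (by linear_combination hφ)

lemma inv_pow_three_of_sq_eq_add_one (hφ : φ ^ 2 = φ + 1) : (φ ^ 3)⁻¹ = 2 * φ - 3 :=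
  inv_eq_of_mul_eq_one_right (by linear_combination (2 * φ ^ 2 - φ + 1) * hφ)

lemma inv_pow_four_of_sq_eq_add_one (hφ : φ ^ 2 = φ + 1) : (φ ^ 4)⁻¹ = 5 - 3 * φ :=
  inv_eq_of_mul_eq_one_right (by linear_combination (-3 * φ ^ 3 + 2 * φ ^ 2 - φ + 1) * hφ)

lemma hat_combination_eq (hφ : φ ^ 2 = φ + 1) {x y m n ε₁ ε₂ : K}
    (h₁ : (φ ^ 4)⁻¹ * x + φ⁻¹ * y = m + ε₁) (h₂ : (φ ^ 3)⁻¹ * x = n + ε₂) :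
    (φ ^ 4)⁻¹ * (φ ^ 3 * x - ε₂) + φ⁻¹ * (φ ^ 3 * y - 2 * ε₁ - 3 * ε₂) - (-(φ ^ 3)⁻¹ * ε₁)
      = m + 2 * n + 2 * y := by
  simp only [inv_eq_sub_one_of_sq_eq_add_one hφ, inv_pow_three_of_sq_eq_add_one hφ,
    inv_pow_four_of_sq_eq_add_one hφ] at h₁ h₂ ⊢
  linear_combination h₁ + 2 * h₂ + ((-3 * φ ^ 2 + 2 * φ - 1) * x + (φ ^ 2 + 1) * y) * hφ

end GoldenField

theorem hat_cong (x y m n : ℤ) (ε₁ ε₂ : ℝ)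
    (h₁ : (gr ^ 4)⁻¹ * x + gr⁻¹ * y = (m : ℝ) + ε₁)
    (h₂ : (gr ^ 3)⁻¹ * x = (n : ℝ) + ε₂) :
    ∃ k : ℤ,
      (gr ^ 4)⁻¹ * (gr ^ 3 * x - ε₂) + gr⁻¹ * (gr ^ 3 * y - 2 * ε₁ - 3 * ε₂)
        - (-(gr ^ 3)⁻¹ * ε₁) = (k : ℝ) := by
  have hgr : gr ^ 2 = gr + 1 := Real.goldenRatio_sq
  refine ⟨m + 2 * n + 2 * y, ?_⟩
  push_cast
  exact hat_combination_eq hgr h₁ h₂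
end
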